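/- The sequence of Baxter numbers B_n is log-convex: for all n ≥ 2, B_n^2 ≤ B_{n-1} * B_{n+1}. -/

import Mathlib

open Finset

/-- The Baxter numbers. -/
def baxter (n : ℕ) : ℚ :=
  ∑ k ∈ Finset.Icc 1 n,
    2 / ((n : ℚ) * ((n : ℚ) + 1) ^ 2) * ((n + 1).choose (k - 1) : ℚ) *
      ((n + 1).choose k : ℚ) * ((n + 1).choose (k + 1) : ℚ)

/-!
Zeilberger's creative telescoping certifies the recurrence
`(n+4)(n+5) B_{n+2} = (7n²+35n+40) B_{n+1} + 8n(n+1) B_n`: after scaling, the summand of the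
recurrence operator is the forward difference in `k` of an explicit polynomial multiple of the
summand. Induction on the recurrence then traps the ratios,
`8m/(m+4) ≤ B_{m+1}/B_m ≤ 8(m+1)/(m+5)`, and since the upper bound at `m` is the lower bound
at `m + 1`, the ratios `B_{m+1}/B_m` increase.
-/

lemma Nat.cast_choose_succ_right_mul {R : Type*} [CommRing R] (M i : ℕ) :
    (M.choose (i + 1) : R) * (i + 1) = M.choose i * (M - i) := by
  rcases le_or_gt i M with h | h
  · exact_mod_cast congrArg (Nat.cast : ℕ → R) (Nat.choose_succ_right_eq M i)
  · simp [Nat.choose_eq_zero_of_lt h, Nat.choose_eq_zero_of_lt (Nat.lt_succ_of_lt h)]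

lemma Nat.cast_choose_mul_succ {R : Type*} [CommRing R] (M i : ℕ) :
    (M.choose i : R) * (M + 1) = (M + 1).choose i * (M + 1 - i) := by
  rcases le_or_gt i (M + 1) with h | h
  · exact_mod_cast congrArg (Nat.cast : ℕ → R) (Nat.choose_mul_succ_eq M i)
  · simp [Nat.choose_eq_zero_of_lt h, Nat.choose_eq_zero_of_lt (Nat.lt_of_succ_lt h)]

def baxterTerm (n k : ℕ) : ℚ :=
  ((n + 1).choose (k - 1) : ℚ) * ((n + 1).choose k : ℚ) * ((n + 1).choose (k + 1) : ℚ)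

lemma baxterTerm_eq_zero_of_lt {n k : ℕ} (h : n < k) : baxterTerm n k = 0 := by
  simp [baxterTerm, Nat.choose_eq_zero_of_lt (show n + 1 < k + 1 by omega)]

lemma baxterTerm_succ_right (m j : ℕ) :
    ((j : ℚ) + 1) * (j + 2) * (j + 3) * baxterTerm m (j + 2)
      = ((m : ℚ) + 1 - j) * (m - j) * (m - 1 - j) * baxterTerm m (j + 1) := by
  have e1 := Nat.cast_choose_succ_right_mul (R := ℚ) (m + 1) j
  have e2 := Nat.cast_choose_succ_right_mul (R := ℚ) (m + 1) (j + 1)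
  have e3 := Nat.cast_choose_succ_right_mul (R := ℚ) (m + 1) (j + 2)
  simp only [baxterTerm, Nat.add_sub_cancel]
  push_cast at e1 e2 e3 ⊢
  linear_combination
    ((j + 2) * ((m + 1).choose (j + 2) : ℚ) * (j + 3) * ((m + 1).choose (j + 3) : ℚ)) * e1
    + ((m + 1 - j) * ((m + 1).choose j : ℚ) * (j + 3) * ((m + 1).choose (j + 3) : ℚ)) * e2
    + ((m + 1 - j) * (m - j) * ((m + 1).choose j : ℚ) * ((m + 1).choose (j + 1) : ℚ)) * e3

lemma baxterTerm_succ_left (m j : ℕ) :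
    ((m : ℚ) + 2) ^ 3 * baxterTerm m (j + 1)
      = ((m : ℚ) + 2 - j) * (m + 1 - j) * (m - j) * baxterTerm (m + 1) (j + 1) := by
  have e0 := Nat.cast_choose_mul_succ (R := ℚ) (m + 1) j
  have e1 := Nat.cast_choose_mul_succ (R := ℚ) (m + 1) (j + 1)
  have e2 := Nat.cast_choose_mul_succ (R := ℚ) (m + 1) (j + 2)
  simp only [baxterTerm, Nat.add_sub_cancel, add_assoc, Nat.reduceAdd] at e0 e1 e2 ⊢
  push_cast at e0 e1 e2 ⊢
  linear_combination
    (((m : ℚ) + 2) ^ 2 * ((m + 1).choose (j + 1) : ℚ) * ((m + 1).choose (j + 2) : ℚ)) * e0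
    + ((m + 2 - j) * ((m + 2).choose j : ℚ) * (m + 2) * ((m + 1).choose (j + 2) : ℚ)) * e1
    + ((m + 2 - j) * (m + 1 - j) * ((m + 2).choose j : ℚ) * ((m + 2).choose (j + 1) : ℚ)) * e2

-- The polynomial factor is the output of Zeilberger's algorithm for `baxterTerm`.
def baxterCertificate (n k : ℕ) : ℚ :=
  ((14 * (n : ℚ) ^ 2 + 88 * n + 134) * (n + 2) * k - (27 * (n : ℚ) ^ 2 + 147 * n + 194) * k ^ 2
    - (14 * (n : ℚ) ^ 3 + 116 * n ^ 2 + 292 * n + 220) * k ^ 3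
    + (27 * (n : ℚ) ^ 2 + 147 * n + 190) * k ^ 4 - (18 * (n : ℚ) + 48) * k ^ 5 + 4 * k ^ 6)
    * baxterTerm (n + 2) k

lemma baxterTerm_creative_telescoping (n k : ℕ) (hk : 1 ≤ k) :
    ((n : ℚ) + 2) * (n + 3) * (((n : ℚ) + 1) * (n + 2) * (n + 4) * (n + 5) * baxterTerm (n + 2) k
      - ((n : ℚ) + 3) ^ 2 * (7 * n ^ 2 + 35 * n + 40) * baxterTerm (n + 1) k
      - 8 * ((n : ℚ) + 2) ^ 2 * (n + 3) ^ 2 * baxterTerm n k)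
      = baxterCertificate n (k + 1) - baxterCertificate n k := by
  obtain ⟨j, rfl⟩ : ∃ j, k = j + 1 := ⟨k - 1, by omega⟩
  have hY := baxterTerm_succ_right (n + 2) j
  have hZ := baxterTerm_succ_left (n + 1) j
  have hW := baxterTerm_succ_left n j
  push_cast at hY hZ
  rw [mul_comm, ← eq_div_iff (by positivity)] at hY hZ hW
  rw [baxterCertificate, baxterCertificate, hW, hZ, hY]
  push_cast
  field_simp
  ring

lemma baxterCertificate_one (n : ℕ) : baxterCertificate n 1 = 0 := by
  rw [baxterCertificate]
  ring

lemma baxterTerm_sum_recurrence (n : ℕ) :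
    ((n : ℚ) + 1) * (n + 2) * (n + 4) * (n + 5) * ∑ k ∈ Icc 1 (n + 2), baxterTerm (n + 2) k
      = ((n : ℚ) + 3) ^ 2 * (7 * n ^ 2 + 35 * n + 40) * ∑ k ∈ Icc 1 (n + 2), baxterTerm (n + 1) k
        + 8 * ((n : ℚ) + 2) ^ 2 * (n + 3) ^ 2 * ∑ k ∈ Icc 1 (n + 2), baxterTerm n k := by
  have htel : ∑ k ∈ Icc 1 (n + 2), (baxterCertificate n (k + 1) - baxterCertificate n k) = 0 := by
    rw [Finset.sum_Icc_sub (by omega), baxterCertificate_one, baxterCertificate,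
      baxterTerm_eq_zero_of_lt (by omega)]
    ring
  rw [← Finset.sum_congr rfl fun k hk => baxterTerm_creative_telescoping n k
    (Finset.mem_Icc.1 hk).1] at htel
  simp only [← Finset.mul_sum, Finset.sum_sub_distrib] at htel
  have := (mul_eq_zero.1 htel).resolve_left (by positivity)
  linarith

lemma baxter_mul_eq_sum_baxterTerm {n N : ℕ} (h : n ≤ N) :
    (n : ℚ) * (n + 1) ^ 2 * baxter n = 2 * ∑ k ∈ Icc 1 N, baxterTerm n k := by
  have hshrink : ∑ k ∈ Icc 1 N, baxterTerm n k = ∑ k ∈ Icc 1 n, baxterTerm n k :=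
    (Finset.sum_subset (Finset.Icc_subset_Icc_right h) fun k hkN hkn =>
      baxterTerm_eq_zero_of_lt (by simp only [Finset.mem_Icc] at hkN hkn; omega)).symm
  rcases Nat.eq_zero_or_pos n with rfl | hn
  · simp [hshrink]
  rw [hshrink, baxter, Finset.mul_sum, Finset.mul_sum]
  refine Finset.sum_congr rfl fun k _ => ?_
  rw [baxterTerm]
  field_simp

theorem baxter_recurrence (n : ℕ) :
    ((n : ℚ) + 4) * (n + 5) * baxter (n + 2)
      = (7 * (n : ℚ) ^ 2 + 35 * n + 40) * baxter (n + 1) + 8 * n * (n + 1) * baxter n := by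
  have h2 := baxter_mul_eq_sum_baxterTerm (le_refl (n + 2))
  have h1 := baxter_mul_eq_sum_baxterTerm (by omega : n + 1 ≤ n + 2)
  have h0 := baxter_mul_eq_sum_baxterTerm (by omega : n ≤ n + 2)
  push_cast at h2 h1
  refine mul_left_cancel₀ (by positivity : ((n : ℚ) + 1) * (n + 2) ^ 2 * (n + 3) ^ 2 ≠ 0) ?_
  linear_combination ((n : ℚ) + 1) * (n + 2) * (n + 4) * (n + 5) * h2
    - ((n : ℚ) + 3) ^ 2 * (7 * n ^ 2 + 35 * n + 40) * h1
    - 8 * ((n : ℚ) + 2) ^ 2 * (n + 3) ^ 2 * h0 + 2 * baxterTerm_sum_recurrence n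

lemma baxter_nonneg (n : ℕ) : 0 ≤ baxter n :=
  Finset.sum_nonneg fun _ _ => by positivity

lemma baxter_one : baxter 1 = 1 := by
  norm_num [baxter]

lemma baxter_two : baxter 2 = 2 := by
  norm_num [baxter, Finset.sum_Icc_succ_top, Nat.choose]

lemma baxter_succ_ratio_bounds {m : ℕ} (hm : 1 ≤ m) :
    8 * (m : ℚ) * baxter m ≤ (m + 4) * baxter (m + 1)
      ∧ ((m : ℚ) + 5) * baxter (m + 1) ≤ 8 * (m + 1) * baxter m := by
  induction m, hm using Nat.le_induction with
  | base => norm_num [baxter_one, baxter_two]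
  | succ m _ ih =>
    obtain ⟨hlow, hup⟩ := ih
    have hrec := baxter_recurrence m
    have hB := baxter_nonneg (m + 1)
    have hm0 : (0 : ℚ) ≤ m := m.cast_nonneg
    push_cast
    constructor
    · refine le_of_mul_le_mul_left ?_ (by positivity : (0 : ℚ) < m + 4)
      nlinarith [mul_le_mul_of_nonneg_left hup hm0]
    · refine le_of_mul_le_mul_left ?_ (by positivity : (0 : ℚ) < (m + 4) * (m + 5))
      nlinarith [mul_le_mul_of_nonneg_left hlow (by positivity : (0 : ℚ) ≤ (m + 1) * (m + 6))]

theorem baxter_log_convex (n : ℕ) (hn : 2 ≤ n) :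
    (baxter n) ^ 2 ≤ baxter (n - 1) * baxter (n + 1) := by
  obtain ⟨m, hm, rfl⟩ : ∃ m, 1 ≤ m ∧ n = m + 1 := ⟨n - 1, by omega, by omega⟩
  have hup := (baxter_succ_ratio_bounds hm).2
  have hlow := (baxter_succ_ratio_bounds (Nat.le_succ_of_le hm)).1
  push_cast at hlow
  rw [Nat.add_sub_cancel]
  refine le_of_mul_le_mul_left ?_ (by positivity : (0 : ℚ) < 8 * (m + 1) * (m + 5))
  calc 8 * ((m : ℚ) + 1) * (m + 5) * baxter (m + 1) ^ 2
      = ((m + 5) * baxter (m + 1)) * (8 * (m + 1) * baxter (m + 1)) := by ring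
    _ ≤ (8 * (m + 1) * baxter m) * ((m + 1 + 4) * baxter (m + 1 + 1)) :=
        mul_le_mul hup hlow (by positivity [baxter_nonneg (m + 1)])
          (by positivity [baxter_nonneg m])
    _ = 8 * (m + 1) * (m + 5) * (baxter m * baxter (m + 1 + 1)) := by ring
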